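/- arXiv:2301.11910 — 2 statements merged into one kernel-verified Lean document; each statement's English description precedes it below -/
import Mathlib

section
/- Let n ≥ 1 and let A = J(λ,n) ⊕ J(λ⁻¹,n) be the block-diagonal matrix in GL(2n,D), where either D = ℝ or D = ℂ and λ ∈ D \ {0, 1, -1}, or D = ℍ and λ is a nonzero complex number with nonnegative imaginary part and |λ| ≠ 1, viewed as a quaternion. Then A is strongly reversible in GL(2n,D); that is, there exists an invertible 2n×2n matrix g over D with g² = I and g·A·g⁻¹ = A⁻¹. -/
open Matrix

set_option maxHeartbeats 1000000

/-- The Jordan block `J(λ, m)`: an `m × m` matrix with `λ` on the diagonal,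
`1` on the superdiagonal, and `0` elsewhere. -/
def jordanBlock {D : Type*} [Ring D] (lam : D) (m : ℕ) : Matrix (Fin m) (Fin m) D :=
  Matrix.of fun i j => if i = j then lam else if (i : ℕ) + 1 = (j : ℕ) then 1 else 0

/-- The realification embedding `Ψ : M(n,ℂ) → M(2n,ℝ)`, replacing each complex entry
`z` by the 2×2 real block `((Re z, Im z), (-Im z, Re z))`. -/
def Psi {n : ℕ} (A : Matrix (Fin n) (Fin n) ℂ) :
    Matrix (Fin n × Fin 2) (Fin n × Fin 2) ℝ :=
  Matrix.of fun p q =>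
    !![(A p.1 q.1).re, (A p.1 q.1).im; -(A p.1 q.1).im, (A p.1 q.1).re] p.2 q.2

/-- The standard embedding of `ℂ` into the real quaternions,
sending `a + b i` to `a + b 𝐢`. -/
def toQuat (z : ℂ) : Quaternion ℝ := ⟨z.re, z.im, 0, 0⟩

/-- `X ∈ gl(n,D)` is `Ad_{GL(n,D)}`-real: there is an invertible matrix `g`
with `g X g⁻¹ = -X`. -/
def AdjReal {D : Type*} [Ring D] {ι : Type*} [Fintype ι] [DecidableEq ι]
    (X : Matrix ι ι D) : Prop :=
  ∃ g : (Matrix ι ι D)ˣ, g.val * X * (g⁻¹).val = -X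

/-- `X ∈ gl(n,D)` is strongly `Ad_{GL(n,D)}`-real: there is an invertible matrix `g`
with `g² = I` and `g X g⁻¹ = -X`. -/
def StronglyAdjReal {D : Type*} [Ring D] {ι : Type*} [Fintype ι] [DecidableEq ι]
    (X : Matrix ι ι D) : Prop :=
  ∃ g : (Matrix ι ι D)ˣ, g * g = 1 ∧ g.val * X * (g⁻¹).val = -X

/-- `A` is reversible in `GL(n,D)`: `A` is invertible and there is an invertible
matrix `g` with `g A g⁻¹ = A⁻¹`. -/
def Reversible {D : Type*} [Ring D] {ι : Type*} [Fintype ι] [DecidableEq ι]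
    (A : Matrix ι ι D) : Prop :=
  ∃ a : (Matrix ι ι D)ˣ, a.val = A ∧ ∃ g : (Matrix ι ι D)ˣ, g * a * g⁻¹ = a⁻¹

/-- `A` is strongly reversible in `GL(n,D)`: `A` is invertible and there is an
invertible matrix `g` with `g² = I` and `g A g⁻¹ = A⁻¹`. -/
def StronglyReversible {D : Type*} [Ring D] {ι : Type*} [Fintype ι] [DecidableEq ι]
    (A : Matrix ι ι D) : Prop :=
  ∃ a : (Matrix ι ι D)ˣ, a.val = A ∧ ∃ g : (Matrix ι ι D)ˣ, g * g = 1 ∧ g * a * g⁻¹ = a⁻¹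

/-!
Over a field, `J(λ⁻¹, n)` is similar to `J(λ, n)⁻¹`, and an explicit conjugator is the
upper triangular matrix `H` with entries `(-1)ʲ λ^(i+j) (j choose i)`; the identity
`J(λ) H J(λ⁻¹) = H` reduces entrywise to Pascal's rule. Any such `H` yields the involution
`[[0, H], [H⁻¹, 0]]` reversing `J(λ) ⊕ J(λ⁻¹)`. The quaternionic case is the complex one
pushed along `ℂ →+* ℍ`.
-/

section Involution

variable {R : Type*} [CommRing R] {ι : Type*} [Fintype ι] [DecidableEq ι]

theorem isUnit_fromBlocks_of_mul_mul_eq {A B H : Matrix ι ι R} (hH : IsUnit H)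
    (h : A * H * B = H) : IsUnit (fromBlocks A 0 0 B) := by
  rw [isUnit_iff_isUnit_det, det_fromBlocks_zero₂₁]
  have hdet : A.det * B.det * H.det = 1 * H.det := by
    have := congrArg det h
    rw [det_mul, det_mul] at this
    linear_combination this
  exact (((isUnit_iff_isUnit_det H).mp hH).mul_left_injective hdet).symm ▸ isUnit_one

theorem stronglyReversible_fromBlocks_of_mul_mul_eq {A B H : Matrix ι ι R} (hH : IsUnit H)
    (h : A * H * B = H) : StronglyReversible (fromBlocks A 0 0 B) := by
  obtain ⟨u, rfl⟩ := hH
  set Hi : Matrix ι ι R := ↑u⁻¹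
  have hA := isUnit_fromBlocks_of_mul_mul_eq u.isUnit h
  set g : Matrix (ι ⊕ ι) (ι ⊕ ι) R := fromBlocks 0 u Hi 0
  have hg : g * g = 1 := by
    simp [g, Hi, fromBlocks_multiply, ← fromBlocks_one]
  have hHB : u * B * Hi * A = 1 :=
    mul_eq_one_comm.mp (by rw [← mul_assoc, ← mul_assoc, h, u.mul_inv])
  have hAH : Hi * A * u * B = 1 := by
    rw [mul_assoc Hi, mul_assoc Hi, h, u.inv_mul]
  refine ⟨hA.unit, hA.unit_spec, ⟨g, g, hg, hg⟩, Units.ext hg, ?_⟩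
  refine eq_inv_of_mul_eq_one_left (Units.ext ?_)
  change g * hA.unit * g * hA.unit = 1
  simp only [hA.unit_spec, g, fromBlocks_multiply, Matrix.zero_mul, Matrix.mul_zero, add_zero,
    zero_add, hHB, hAH, fromBlocks_one]

end Involution

section JordanBlock

/-- The nilpotent part `J(0, n)` of a Jordan block. -/
def superdiagonalShift (R : Type*) [Ring R] (n : ℕ) : Matrix (Fin n) (Fin n) R :=
  of fun i j => if (i : ℕ) + 1 = j then 1 else 0

variable {R : Type*} [Ring R] {n : ℕ}

theorem jordanBlock_eq_smul_one_add_superdiagonalShift (lam : R) (n : ℕ) :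
    jordanBlock lam n = lam • (1 : Matrix (Fin n) (Fin n) R) + superdiagonalShift R n := by
  ext i j
  by_cases h : i = j
  · subst h; simp [jordanBlock, superdiagonalShift]
  · simp [jordanBlock, superdiagonalShift, h, one_apply_ne h]

theorem superdiagonalShift_mul_apply (M : Matrix (Fin n) (Fin n) R) (i j : Fin n) :
    (superdiagonalShift R n * M) i j =
      if h : (i : ℕ) + 1 < n then M ⟨i + 1, h⟩ j else 0 := by
  rw [mul_apply]
  split_ifs with h
  · rw [Finset.sum_eq_single_of_mem ⟨i + 1, h⟩ (Finset.mem_univ _)]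
    · simp [superdiagonalShift]
    · intro k _ hk
      simp only [superdiagonalShift, of_apply]
      rw [if_neg (fun he => hk (Fin.ext he.symm)), zero_mul]
  · refine Finset.sum_eq_zero fun k _ => ?_
    simp only [superdiagonalShift, of_apply]
    rw [if_neg (by have := k.isLt; omega), zero_mul]

theorem mul_superdiagonalShift_apply (M : Matrix (Fin n) (Fin n) R) (i j : Fin n) :
    (M * superdiagonalShift R n) i j =
      if (j : ℕ) = 0 then 0 else M i ⟨j - 1, by omega⟩ := by
  rw [mul_apply]
  split_ifs with h
  · refine Finset.sum_eq_zero fun k _ => ?_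
    simp only [superdiagonalShift, of_apply]
    rw [if_neg (by omega), mul_zero]
  · rw [Finset.sum_eq_single_of_mem ⟨j - 1, by omega⟩ (Finset.mem_univ _)]
    · simp only [superdiagonalShift, of_apply]
      rw [if_pos (by omega), mul_one]
    · intro k _ hk
      simp only [superdiagonalShift, of_apply]
      rw [if_neg (fun he => hk (Fin.ext (by simp only; omega))), mul_zero]

theorem jordanBlock_map {S : Type*} [Ring S] (φ : R →+* S) (lam : R) (m : ℕ) :
    (jordanBlock lam m).map φ = jordanBlock (φ lam) m := by
  ext i j
  simp only [jordanBlock, map_apply, of_apply]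
  split_ifs <;> simp

end JordanBlock

section ReversingMatrix

variable {F : Type*} [Field F] {n : ℕ}

def reversingMatrix (lam : F) (n : ℕ) : Matrix (Fin n) (Fin n) F :=
  of fun i j => (-1) ^ (j : ℕ) * lam ^ ((i : ℕ) + j) * ((j : ℕ).choose i)

theorem reversingMatrix_blockTriangular (lam : F) (n : ℕ) :
    (reversingMatrix lam n).BlockTriangular id := fun i j (h : (j : ℕ) < i) => by
  simp [reversingMatrix, Nat.choose_eq_zero_of_lt h]

theorem isUnit_reversingMatrix {lam : F} (hl : lam ≠ 0) (n : ℕ) :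
    IsUnit (reversingMatrix lam n) := by
  rw [isUnit_iff_isUnit_det, det_of_isUpperTriangular (reversingMatrix_blockTriangular lam n),
    isUnit_iff_ne_zero, Finset.prod_ne_zero_iff]
  intro i _
  simp [reversingMatrix, hl]

theorem smul_reversingMatrix_mul_add_inv_smul_mul_reversingMatrix_add {lam : F} (hl : lam ≠ 0)
    (n : ℕ) :
    lam • (reversingMatrix lam n * superdiagonalShift F n) +
      lam⁻¹ • (superdiagonalShift F n * reversingMatrix lam n) +
      superdiagonalShift F n * reversingMatrix lam n * superdiagonalShift F n = 0 := by
  ext i j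
  simp only [Matrix.add_apply, Matrix.smul_apply, Matrix.zero_apply, smul_eq_mul,
    mul_superdiagonalShift_apply, superdiagonalShift_mul_apply]
  by_cases hj : (j : ℕ) = 0
  · split_ifs <;> simp [reversingMatrix, hj]
  obtain ⟨j', hj'⟩ : ∃ j', (j : ℕ) = j' + 1 := Nat.exists_eq_succ_of_ne_zero hj
  by_cases hi : (i : ℕ) + 1 < n
  · simp only [hi, dif_pos, reversingMatrix, of_apply, hj', Nat.add_sub_cancel,
      Nat.choose_succ_succ]
    push_cast
    field_simp
    ring
  · have hji : (j : ℕ) - 1 < i := by omega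
    simp [hj, hi, reversingMatrix, Nat.choose_eq_zero_of_lt hji]

theorem jordanBlock_mul_reversingMatrix_mul_jordanBlock_inv {lam : F} (hl : lam ≠ 0) (n : ℕ) :
    jordanBlock lam n * reversingMatrix lam n * jordanBlock lam⁻¹ n = reversingMatrix lam n := by
  rw [jordanBlock_eq_smul_one_add_superdiagonalShift,
    jordanBlock_eq_smul_one_add_superdiagonalShift]
  set H := reversingMatrix lam n
  set N := superdiagonalShift F n
  calc (lam • 1 + N) * H * (lam⁻¹ • 1 + N)
      = H + (lam • (H * N) + lam⁻¹ • (N * H) + N * H * N) := by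
        simp only [add_mul, mul_add, smul_mul_assoc, mul_smul_comm, Matrix.one_mul,
          Matrix.mul_one, smul_add, smul_smul, inv_mul_cancel₀ hl, one_smul]
        abel
    _ = H := by
        rw [smul_reversingMatrix_mul_add_inv_smul_mul_reversingMatrix_add hl, add_zero]

theorem stronglyReversible_fromBlocks_jordanBlock {lam : F} (hl : lam ≠ 0) (n : ℕ) :
    StronglyReversible (fromBlocks (jordanBlock lam n) 0 0 (jordanBlock lam⁻¹ n)) :=
  stronglyReversible_fromBlocks_of_mul_mul_eq (isUnit_reversingMatrix hl n)
    (jordanBlock_mul_reversingMatrix_mul_jordanBlock_inv hl n)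

end ReversingMatrix

theorem StronglyReversible.map {R S : Type*} [Ring R] [Ring S] (φ : R →+* S)
    {ι : Type*} [Fintype ι] [DecidableEq ι] {A : Matrix ι ι R}
    (h : StronglyReversible A) : StronglyReversible (A.map φ) := by
  obtain ⟨a, ha, g, hg, hga⟩ := h
  let Φ : Matrix ι ι R →* Matrix ι ι S := φ.mapMatrix.toMonoidHom
  refine ⟨Units.map Φ a, by simp [Φ, ha], Units.map Φ g, ?_, ?_⟩
  · rw [← map_mul, hg, map_one]
  · rw [← map_inv, ← map_mul, ← map_mul, hga, map_inv]

theorem stmt6_general (n : ℕ) :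
    (∀ lam : ℝ, lam ≠ 0 → lam ≠ 1 → lam ≠ -1 →
      StronglyReversible (fromBlocks (jordanBlock lam n) 0 0 (jordanBlock lam⁻¹ n))) ∧
    (∀ lam : ℂ, lam ≠ 0 → lam ≠ 1 → lam ≠ -1 →
      StronglyReversible (fromBlocks (jordanBlock lam n) 0 0 (jordanBlock lam⁻¹ n))) ∧
    (∀ lam : ℂ, lam ≠ 0 → 0 ≤ lam.im → ‖lam‖ ≠ 1 →
      StronglyReversible
        (fromBlocks (jordanBlock (toQuat lam) n) 0 0 (jordanBlock (toQuat lam⁻¹) n))) := by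
  refine ⟨fun lam hl _ _ => stronglyReversible_fromBlocks_jordanBlock hl n,
    fun lam hl _ _ => stronglyReversible_fromBlocks_jordanBlock hl n, fun lam hl _ _ => ?_⟩
  have h := (stronglyReversible_fromBlocks_jordanBlock hl n).map
    Quaternion.ofComplex.toRingHom
  rwa [fromBlocks_map, jordanBlock_map, jordanBlock_map, Matrix.map_zero _ (map_zero _)] at h

/-- For `n ≥ 1`, the block-diagonal matrix `A = J(λ,n) ⊕ J(λ⁻¹,n)` is strongly
reversible in `GL(2n,D)`, where `D = ℝ` or `ℂ` and `λ ∈ D \ {0,1,-1}`, or `D = ℍ` and `λ` is a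
nonzero complex number with nonnegative imaginary part and `|λ| ≠ 1`, viewed as a quaternion. -/
theorem stmt6 (n : ℕ) (hn : 1 ≤ n) :
    (∀ lam : ℝ, lam ≠ 0 → lam ≠ 1 → lam ≠ -1 →
      StronglyReversible (fromBlocks (jordanBlock lam n) 0 0 (jordanBlock lam⁻¹ n))) ∧
    (∀ lam : ℂ, lam ≠ 0 → lam ≠ 1 → lam ≠ -1 →
      StronglyReversible (fromBlocks (jordanBlock lam n) 0 0 (jordanBlock lam⁻¹ n))) ∧
    (∀ lam : ℂ, lam ≠ 0 → 0 ≤ lam.im → ‖lam‖ ≠ 1 →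
      StronglyReversible
        (fromBlocks (jordanBlock (toQuat lam) n) 0 0 (jordanBlock (toQuat lam⁻¹) n))) :=
  stmt6_general n
end

section
/- Let μ be a complex number with |μ| = 1, μ ∉ {1,-1}, and nonnegative imaginary part, and let n ≥ 1. Then the block-diagonal matrix A = J(μ,n) ⊕ J(μ,n) ∈ GL(2n,ℍ), with μ viewed as a quaternion, is strongly reversible in GL(2n,ℍ); that is, there exists an invertible 2n×2n quaternionic matrix g with g² = I and g·A·g⁻¹ = A⁻¹. -/
open Matrix

set_option maxHeartbeats 1000000

/-!
For `μ ≠ 0` the matrix `M = J(μ)⁻¹ - μ⁻¹` is strictly upper triangular with constant nonzero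
superdiagonal `-μ⁻²`, hence nilpotent, and its Krylov matrix (rows `e₀ᵀ Mⁱ`) is invertible and
intertwines `M` with the nilpotent shift; so `J(μ)⁻¹` is conjugate to `J(μ⁻¹)` over `ℂ`.
When `|μ| = 1` we have `μ⁻¹ = μ̄`, and conjugating by the quaternion `j` turns `J(μ)` into `J(μ̄)`,
so `J(μ)` is conjugate to its inverse in `GL(n, ℍ)`. Finally, if `h J h⁻¹ = J⁻¹` then also
`h⁻¹ J h = J⁻¹`, so the involution `[[0, h], [h⁻¹, 0]]` conjugates `J ⊕ J` to its inverse.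
-/

open scoped Quaternion ComplexConjugate

section

variable {n : ℕ}

section Ring

variable {D : Type*} [Ring D]

theorem jordanBlock_map_s7 {E : Type*} [Ring E] (f : D →+* E) (a : D) :
    (jordanBlock a n).map f = jordanBlock (f a) n := by
  ext i j
  simp only [map_apply, jordanBlock, of_apply]
  split_ifs <;> simp

theorem jordanBlock_eq_smul_one_add (a : D) :
    jordanBlock a n = a • (1 : Matrix (Fin n) (Fin n) D) + jordanBlock 0 n := by
  ext i j
  simp only [jordanBlock, of_apply, Matrix.add_apply, Matrix.smul_apply, one_apply, smul_eq_mul]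
  split_ifs <;> simp_all

theorem jordanBlock_zero_mul_apply (X : Matrix (Fin n) (Fin n) D) (i j : Fin n) :
    (jordanBlock (0 : D) n * X) i j = if h : (i : ℕ) + 1 < n then X ⟨i + 1, h⟩ j else 0 := by
  have hN : ∀ k : Fin n, jordanBlock (0 : D) n i k = if (i : ℕ) + 1 = k then 1 else 0 := by
    intro k
    simp only [jordanBlock, of_apply]
    split_ifs <;> simp_all
  simp only [mul_apply, hN, ite_mul, one_mul, zero_mul]
  split_ifs with h
  · rw [Finset.sum_eq_single ⟨i + 1, h⟩ (fun k _ hk => if_neg fun he => hk (Fin.ext he.symm))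
      (by simp)]
    simp
  · exact Finset.sum_eq_zero fun k _ => if_neg (by omega)

theorem isConj_jordanBlock {a b : D} (h : IsConj a b) :
    IsConj (jordanBlock a n) (jordanBlock b n) := by
  obtain ⟨c, hc⟩ := h
  refine ⟨(c.isUnit.map (scalar (Fin n))).unit, ?_⟩
  ext i j
  simp only [IsUnit.unit_spec, scalar_apply, diagonal_mul, mul_diagonal, jordanBlock, of_apply]
  split_ifs <;> simp [hc.eq]

end Ring

section StrictlyUpper

variable {R : Type*} [Semiring R] {M : Matrix (Fin n) (Fin n) R}

theorem pow_apply_eq_zero_of_lt_add (hM : ∀ i j : Fin n, (j : ℕ) ≤ i → M i j = 0) (k : ℕ)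
    {i j : Fin n} (hij : (j : ℕ) < i + k) : (M ^ k) i j = 0 := by
  induction k generalizing j with
  | zero => exact one_apply_ne (by rintro rfl; omega)
  | succ k ih =>
    rw [pow_succ, mul_apply]
    refine Finset.sum_eq_zero fun l _ => ?_
    rcases lt_or_ge (l : ℕ) (i + k) with hl | hl
    · rw [ih hl, zero_mul]
    · rw [hM l j (by omega), mul_zero]

theorem pow_apply_eq_pow_of_eq_add (hM : ∀ i j : Fin n, (j : ℕ) ≤ i → M i j = 0) {d : R}
    (hd : ∀ i j : Fin n, (j : ℕ) = i + 1 → M i j = d) (k : ℕ) {i j : Fin n}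
    (hij : (j : ℕ) = i + k) : (M ^ k) i j = d ^ k := by
  induction k generalizing j with
  | zero => simp [one_apply, Fin.ext_iff, hij]
  | succ k ih =>
    have hl : (i : ℕ) + k < n := by omega
    rw [pow_succ, mul_apply, Finset.sum_eq_single ⟨i + k, hl⟩, ih rfl, hd _ _ (by simp; omega),
      pow_succ]
    · intro l _ hne
      rcases lt_or_ge (l : ℕ) (i + k) with hl | hl
      · rw [pow_apply_eq_zero_of_lt_add hM k hl, zero_mul]
      · rw [hM l j (by simp [Fin.ext_iff] at hne; omega), mul_zero]
    · simp

end StrictlyUpper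

section Krylov

variable {R : Type*}

def krylovMatrix [Semiring R] (M : Matrix (Fin n) (Fin n) R) : Matrix (Fin n) (Fin n) R :=
  of fun i j => (M ^ (i : ℕ)) ⟨0, i.pos⟩ j

theorem jordanBlock_zero_mul_krylovMatrix [Ring R] {M : Matrix (Fin n) (Fin n) R}
    (hM : M ^ n = 0) : jordanBlock 0 n * krylovMatrix M = krylovMatrix M * M := by
  ext i j
  have hrow : (krylovMatrix M * M) i j = (M ^ ((i : ℕ) + 1)) ⟨0, i.pos⟩ j := by
    rw [pow_succ, mul_apply, mul_apply]
    rfl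
  rw [jordanBlock_zero_mul_apply, hrow]
  split_ifs with h
  · rfl
  · rw [show (i : ℕ) + 1 = n by omega, hM, Matrix.zero_apply]

theorem isUnit_krylovMatrix [CommRing R] {M : Matrix (Fin n) (Fin n) R}
    (hM : ∀ i j : Fin n, (j : ℕ) ≤ i → M i j = 0) {d : R}
    (hd : ∀ i j : Fin n, (j : ℕ) = i + 1 → M i j = d) (hdu : IsUnit d) :
    IsUnit (krylovMatrix M) := by
  have htri : (krylovMatrix M).IsUpperTriangular := fun i j hij =>
    pow_apply_eq_zero_of_lt_add hM _ (by simpa using hij)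
  rw [isUnit_iff_isUnit_det, det_of_isUpperTriangular htri, IsUnit.prod_univ_iff]
  intro i
  rw [krylovMatrix, of_apply, pow_apply_eq_pow_of_eq_add hM hd _ (by simp)]
  exact hdu.pow _

end Krylov

section Field

variable {K : Type*} [Field K]

/-- Read off from `(μ + N)⁻¹ = ∑ₖ μ⁻¹ (-μ⁻¹ N)ᵏ`, where `N = jordanBlock 0 n` and `Nⁿ = 0`. -/
def invJordanBlock (μ : K) (n : ℕ) : Matrix (Fin n) (Fin n) K :=
  of fun i j => if i ≤ j then μ⁻¹ * (-μ⁻¹) ^ ((j : ℕ) - i) else 0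

theorem jordanBlock_mul_invJordanBlock {μ : K} (hμ : μ ≠ 0) :
    jordanBlock μ n * invJordanBlock μ n = 1 := by
  ext i j
  rw [jordanBlock_eq_smul_one_add, add_mul, Matrix.add_apply, smul_mul, one_mul, Matrix.smul_apply,
    jordanBlock_zero_mul_apply, one_apply, smul_eq_mul]
  simp only [invJordanBlock, of_apply, Fin.le_iff_val_le_val, Fin.ext_iff]
  rcases lt_trichotomy (i : ℕ) j with hij | hij | hij
  · obtain ⟨d, hd⟩ : ∃ d, (j : ℕ) - i = d + 1 := ⟨j - i - 1, by omega⟩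
    rw [if_pos hij.le, dif_pos (by omega), if_pos (by simp; omega), if_neg hij.ne, hd,
      show (j : ℕ) - (i + 1) = d by omega, pow_succ]
    field_simp
    ring
  · rw [if_pos hij.le, if_pos hij, hij, Nat.sub_self, pow_zero, mul_one, mul_inv_cancel₀ hμ]
    split_ifs <;> first | omega | simp
  · rw [if_neg (by omega), if_neg hij.ne', mul_zero, zero_add]
    split_ifs <;> first | omega | simp

theorem isConj_invJordanBlock {μ : K} (hμ : μ ≠ 0) :
    IsConj (invJordanBlock μ n) (jordanBlock μ⁻¹ n) := by
  set M := invJordanBlock μ n - μ⁻¹ • (1 : Matrix (Fin n) (Fin n) K) with hMdef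
  have hMij : ∀ i j : Fin n, M i j = if (i : ℕ) < j then μ⁻¹ * (-μ⁻¹) ^ ((j : ℕ) - i) else 0 := by
    intro i j
    rw [hMdef, Matrix.sub_apply, Matrix.smul_apply, one_apply, invJordanBlock, of_apply]
    simp only [Fin.le_iff_val_le_val, Fin.ext_iff, smul_eq_mul]
    rcases lt_trichotomy (i : ℕ) j with hij | hij | hij
    · rw [if_pos hij.le, if_neg hij.ne, if_pos hij, mul_zero, sub_zero]
    · rw [if_pos hij.le, if_pos hij, if_neg hij.not_lt, hij, Nat.sub_self, pow_zero, mul_one,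
        sub_self]
    · rw [if_neg (by omega), if_neg hij.ne', if_neg (by omega), mul_zero, sub_zero]
  have hM : ∀ i j : Fin n, (j : ℕ) ≤ i → M i j = 0 := fun i j hji => by
    rw [hMij, if_neg (by omega)]
  have hd : ∀ i j : Fin n, (j : ℕ) = i + 1 → M i j = μ⁻¹ * -μ⁻¹ := fun i j hij => by
    rw [hMij, if_pos (by omega), show (j : ℕ) - i = 1 by omega, pow_one]
  have hMn : M ^ n = 0 := by
    ext i j
    exact pow_apply_eq_zero_of_lt_add hM n (by omega)
  have hQ := isUnit_krylovMatrix hM hd (by simp [hμ])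
  refine ⟨hQ.unit, ?_⟩
  rw [SemiconjBy, IsUnit.unit_spec, jordanBlock_eq_smul_one_add, add_mul,
    jordanBlock_zero_mul_krylovMatrix hMn, show invJordanBlock μ n = μ⁻¹ • 1 + M by simp [M]]
  simp only [mul_add, Matrix.mul_smul, smul_mul, mul_one, one_mul]

end Field

theorem reversible_of_isConj {D : Type*} [Ring D] {ι : Type*} [Fintype ι] [DecidableEq ι]
    {A B : Matrix ι ι D} (hAB : A * B = 1) (hBA : B * A = 1) (h : IsConj A B) :
    Reversible A := by
  obtain ⟨c, hc⟩ := h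
  refine ⟨⟨A, B, hAB, hBA⟩, rfl, c, Units.ext ?_⟩
  simp [hc.eq]

theorem Reversible.stronglyReversible_fromBlocks {D : Type*} [Ring D] {ι : Type*} [Fintype ι]
    [DecidableEq ι] {A : Matrix ι ι D} (hA : Reversible A) :
    StronglyReversible (fromBlocks A 0 0 A) := by
  obtain ⟨a, rfl, g, hg⟩ := hA
  have hg₁ := congrArg Units.val hg
  have hg₂ := congrArg Units.val (show g⁻¹ * a * g = a⁻¹ by
    conv_lhs => rw [← inv_inv a, ← hg]
    group)
  simp only [Units.val_mul] at hg₁ hg₂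
  let a₂ : (Matrix (ι ⊕ ι) (ι ⊕ ι) D)ˣ :=
    ⟨fromBlocks a 0 0 a, fromBlocks ↑a⁻¹ 0 0 ↑a⁻¹, by simp [fromBlocks_multiply],
      by simp [fromBlocks_multiply]⟩
  let G : (Matrix (ι ⊕ ι) (ι ⊕ ι) D)ˣ :=
    ⟨fromBlocks 0 g ↑g⁻¹ 0, fromBlocks 0 g ↑g⁻¹ 0, by simp [fromBlocks_multiply],
      by simp [fromBlocks_multiply]⟩
  refine ⟨a₂, rfl, G, Units.ext ?_, Units.ext ?_⟩
  · simp [G, fromBlocks_multiply]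
  · simp [G, a₂, fromBlocks_multiply, hg₁, hg₂]

theorem isConj_toQuat_conj (z : ℂ) : IsConj (toQuat z) (toQuat (conj z)) := by
  let j : ℍ := ⟨0, 0, 1, 0⟩
  have hj : IsUnit j := Ne.isUnit fun h => by simpa [j] using congrArg QuaternionAlgebra.imJ h
  refine ⟨hj.unit, ?_⟩
  ext <;> simp only [IsUnit.unit_spec, Quaternion.re_mul, Quaternion.imI_mul, Quaternion.imJ_mul,
    Quaternion.imK_mul] <;> simp [j, toQuat]

theorem reversible_jordanBlock_toQuat {μ : ℂ} (hμ : ‖μ‖ = 1) :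
    Reversible (jordanBlock (toQuat μ) n) := by
  have hμ0 : μ ≠ 0 := by rintro rfl; simp at hμ
  let f : Matrix (Fin n) (Fin n) ℂ →+* Matrix (Fin n) (Fin n) ℍ :=
    (Quaternion.ofComplex : ℂ →+* ℍ).mapMatrix
  have hf : ∀ z : ℂ, f (jordanBlock z n) = jordanBlock (toQuat z) n := fun z =>
    jordanBlock_map_s7 _ z
  have hJ : IsConj (jordanBlock (toQuat μ) n) (f (jordanBlock μ⁻¹ n)) := by
    rw [hf, Complex.inv_eq_conj hμ]
    exact isConj_jordanBlock (isConj_toQuat_conj μ)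
  have hK : IsConj (f (invJordanBlock μ n)) (f (jordanBlock μ⁻¹ n)) :=
    f.toMonoidHom.map_isConj (isConj_invJordanBlock hμ0)
  refine reversible_of_isConj (B := f (invJordanBlock μ n)) ?_ ?_ (hJ.trans hK.symm)
  · rw [← hf, ← map_mul, jordanBlock_mul_invJordanBlock hμ0, map_one]
  · rw [← hf, ← map_mul, mul_eq_one_comm.mp (jordanBlock_mul_invJordanBlock hμ0), map_one]

end

theorem stmt7_general (μ : ℂ) (h1 : ‖μ‖ = 1) (n : ℕ) :
    StronglyReversible
      (fromBlocks (jordanBlock (toQuat μ) n) 0 0 (jordanBlock (toQuat μ) n)) :=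
  (reversible_jordanBlock_toQuat h1).stronglyReversible_fromBlocks

/-- For a complex number `μ` with `|μ| = 1`, `μ ∉ {1,-1}`, and nonnegative
imaginary part, and `n ≥ 1`, the block-diagonal quaternionic matrix `A = J(μ,n) ⊕ J(μ,n)`
(with `μ` viewed as a quaternion) is strongly reversible in `GL(2n,ℍ)`. -/
theorem stmt7 (μ : ℂ) (h1 : ‖μ‖ = 1) (h2 : μ ≠ 1) (h3 : μ ≠ -1) (h4 : 0 ≤ μ.im)
    (n : ℕ) (hn : 1 ≤ n) :
    StronglyReversible
      (fromBlocks (jordanBlock (toQuat μ) n) 0 0 (jordanBlock (toQuat μ) n)) :=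
  stmt7_general μ h1 n
end
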